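/- Suppose c admits an AAT representation (u, Γ) and violates Past Independence: there exist a history h and a choice set A with c̃(h)(A) = y ≠ x = c₀(A). Then c violates Full Stability: there exists a sequence of choice sets along which x is chosen from a set containing y at one stage, and y is chosen from a set containing x at a later stage. -/

import Mathlib

/-!
Under AAT the initial choice `x = c₀(A)` lies in `Γ A`, so it stays considered after every
history; hence `y = c̃(h)(A) ≠ x` forces `u x < u y`. Along the sequence `A, {y}, {x, y}, …`
the agent picks `x` from `A`, then `y` from `{y}`, and `y`, now a past choice, beats `x`
in `{x, y}`.
-/

open Finset

variable {X : Type*}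

/-- A history is valid if every choice set in it is nonempty. -/
def ValidHist (h : List (Finset X)) : Prop := ∀ A ∈ h, A.Nonempty

/-- The set of alternatives chosen at some point along history `h`,
where the choice at stage `i` is made from `h.get i` given the prior history `h.take i`. -/
def chosenSet (ct : List (Finset X) → Finset X → X) (h : List (Finset X)) : Set X :=
  {x | ∃ i : Fin h.length, ct (h.take i.1) (h.get i) = x}

/-- Effective consideration set after history `h` facing choice set `A`. -/
def consider (ct : List (Finset X) → Finset X → X) (Γ : Finset X → Set X)
    (h : List (Finset X)) (A : Finset X) : Set X :=
  Γ A ∪ (chosenSet ct h ∩ ↑A)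

/-- `(u, Γ)` is an AAT representation of the choice process `ct`:
`Γ A` is a nonempty subset of `A`, and the choice after any valid history `h` from any
nonempty `A` is the unique `u`-maximizer of `Γ A ∪ (chosenSet h ∩ A)`. -/
def IsAAT (ct : List (Finset X) → Finset X → X) (u : X → ℝ) (Γ : Finset X → Set X) : Prop :=
  (∀ A : Finset X, A.Nonempty → (Γ A).Nonempty ∧ Γ A ⊆ ↑A) ∧
  ∀ h : List (Finset X), ValidHist h → ∀ A : Finset X, A.Nonempty →
    ct h A ∈ consider ct Γ h A ∧
      ∀ z ∈ consider ct Γ h A, z ≠ ct h A → u z < u (ct h A)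

/-- The set of ever-chosen alternatives. -/
def everChosen (ct : List (Finset X) → Finset X → X) : Set X :=
  {x | ∃ (h : List (Finset X)) (A : Finset X), ValidHist h ∧ A.Nonempty ∧ ct h A = x}

/-- The history consisting of the first `n` choice sets of an infinite sequence. -/
def prefHist (seq : ℕ → Finset X) (n : ℕ) : List (Finset X) := (List.range n).map seq

/-- The choice made at stage `n` of the infinite sequence `seq`. -/
def choiceAt (ct : List (Finset X) → Finset X → X) (seq : ℕ → Finset X) (n : ℕ) : X :=
  ct (prefHist seq n) (seq n)

/-- The switch relation `x 𝕊 y`: in some sequence of nonempty choice sets, `y` is chosen at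
some stage and `x` is chosen at a strictly later stage from a set containing `y`. -/
def Switch (ct : List (Finset X) → Finset X → X) (x y : X) : Prop :=
  x ≠ y ∧ ∃ seq : ℕ → Finset X, (∀ n, (seq n).Nonempty) ∧
    ∃ i j : ℕ, i < j ∧ choiceAt ct seq i = y ∧ y ∈ seq j ∧ choiceAt ct seq j = x

theorem validHist_nil : ValidHist ([] : List (Finset X)) := List.forall_mem_nil _

theorem validHist_cons {A : Finset X} {h : List (Finset X)} :
    ValidHist (A :: h) ↔ A.Nonempty ∧ ValidHist h :=
  List.forall_mem_cons

theorem chosenSet_nil (ct : List (Finset X) → Finset X → X) : chosenSet ct [] = ∅ := by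
  ext z
  simp [chosenSet]

theorem choice_mem_chosenSet_concat (ct : List (Finset X) → Finset X → X)
    (h : List (Finset X)) (B : Finset X) : ct h B ∈ chosenSet ct (h ++ [B]) :=
  ⟨⟨h.length, by simp⟩, by simp⟩

namespace IsAAT

variable {ct : List (Finset X) → Finset X → X} {u : X → ℝ} {Γ : Finset X → Set X}
  {h : List (Finset X)} {A : Finset X}

theorem consider_subset (hAAT : IsAAT ct u Γ) (hA : A.Nonempty) :
    consider ct Γ h A ⊆ ↑A :=
  Set.union_subset (hAAT.1 A hA).2 Set.inter_subset_right

theorem choice_mem (hAAT : IsAAT ct u Γ) (hh : ValidHist h) (hA : A.Nonempty) : ct h A ∈ A :=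
  hAAT.consider_subset hA (hAAT.2 h hh A hA).1

theorem choice_singleton (hAAT : IsAAT ct u Γ) (hh : ValidHist h) (y : X) : ct h {y} = y :=
  Finset.mem_singleton.1 (hAAT.choice_mem hh (singleton_nonempty y))

theorem choice_nil_mem (hAAT : IsAAT ct u Γ) (hA : A.Nonempty) : ct [] A ∈ Γ A := by
  simpa [consider, chosenSet_nil] using (hAAT.2 [] validHist_nil A hA).1

theorem choice_nil_lt_choice (hAAT : IsAAT ct u Γ) (hh : ValidHist h) (hA : A.Nonempty)
    (hne : ct h A ≠ ct [] A) : u (ct [] A) < u (ct h A) :=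
  (hAAT.2 h hh A hA).2 _ (Or.inl (hAAT.choice_nil_mem hA)) hne.symm

theorem choice_eq_of_mem_chosenSet (hAAT : IsAAT ct u Γ) (hh : ValidHist h) {y : X}
    (hyh : y ∈ chosenSet ct h) (hyA : y ∈ A) (hmax : IsMaxOn u (↑A) y) : ct h A = y := by
  have hA : A.Nonempty := ⟨y, hyA⟩
  by_contra hne
  have hlt : u y < u (ct h A) := (hAAT.2 h hh A hA).2 y (Or.inr ⟨hyh, hyA⟩) (Ne.symm hne)
  exact (hmax (hAAT.choice_mem hh hA)).not_gt hlt

end IsAAT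

/-- Under AAT, a violation of Past Independence (`c̃(h)(A) = y ≠ x = c₀(A)`) yields a
violation of Full Stability: some sequence chooses `x` from a set containing `y` at one
stage and `y` from a set containing `x` at a later stage. -/
theorem stmt13 (ct : List (Finset X) → Finset X → X) (u : X → ℝ) (Γ : Finset X → Set X)
    (hAAT : IsAAT ct u Γ) (h : List (Finset X)) (hh : ValidHist h)
    (A : Finset X) (hA : A.Nonempty) (x y : X)
    (hx : ct [] A = x) (hy : ct h A = y) (hne : y ≠ x) :
    ∃ seq : ℕ → Finset X, (∀ n, (seq n).Nonempty) ∧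
      ∃ i j : ℕ, i < j ∧ y ∈ seq i ∧ choiceAt ct seq i = x ∧
        x ∈ seq j ∧ choiceAt ct seq j = y := by
  classical
  have hxy : u x < u y := hx ▸ hy ▸ hAAT.choice_nil_lt_choice hh hA (hx ▸ hy ▸ hne)
  have hv : ValidHist [A, {y}] :=
    validHist_cons.2 ⟨hA, validHist_cons.2 ⟨singleton_nonempty y, validHist_nil⟩⟩
  have hy_chosen : y ∈ chosenSet ct [A, {y}] := by
    simpa only [hAAT.choice_singleton (validHist_cons.2 ⟨hA, validHist_nil⟩),
      List.singleton_append] using choice_mem_chosenSet_concat ct [A] {y}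
  have hy_max : IsMaxOn u (↑({x, y} : Finset X)) y := by
    simpa [IsMaxOn, IsMaxFilter] using hxy.le
  refine ⟨fun | 0 => A | 1 => {y} | _ => {x, y}, ?_, 0, 2, two_pos,
    hy ▸ hAAT.choice_mem hh hA, hx, mem_insert_self x {y},
    hAAT.choice_eq_of_mem_chosenSet hv hy_chosen (by simp) hy_max⟩
  rintro (_ | _ | n)
  exacts [hA, singleton_nonempty y, insert_nonempty x {y}]
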